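/- Let λ > 0, R > 0, H ≥ 0, T₀ > 0 and ω > 0. For a scatterer at (x,y) ∈ ℝ², the Nyquist no-aliasing condition |D_f(x,y;Φ)| ≤ 1/(2T₀) holds for every azimuth angle Φ ∈ ℝ if and only if √(x² + y²) ≤ (λ/(4 ω T₀))·√(1 + H²/R²). In particular, the unambiguous imaging region is the closed disk of radius (λ/(4 ω T₀))·√(1 + H²/R²) centered at the origin. (Proposition 2, Unambiguous Imaging Region.) -/

import Mathlib

open Real

/-! The Doppler frequency is a positive multiple of `-x sin Φ + y cos Φ`, and a harmonic
`a sin Φ + b cos Φ` has amplitude `√(a² + b²)`: it is bounded by it (Cauchy–Schwarz) and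
attains it at `Φ = arg (b + a i)`. Dividing the threshold `1/(2T₀)` by the prefactor gives the
radius. -/

theorem abs_mul_sin_add_mul_cos_le_sqrt (a b Φ : ℝ) :
    |a * sin Φ + b * cos Φ| ≤ √(a ^ 2 + b ^ 2) :=
  abs_le_sqrt <| by nlinarith [sq_nonneg (a * cos Φ - b * sin Φ), sin_sq_add_cos_sq Φ]

theorem exists_mul_sin_add_mul_cos_eq_sqrt (a b : ℝ) :
    ∃ Φ, a * sin Φ + b * cos Φ = √(a ^ 2 + b ^ 2) := by
  set z : ℂ := ⟨b, a⟩
  have hz : ‖z‖ = √(a ^ 2 + b ^ 2) := by rw [Complex.norm_eq_sqrt_sq_add_sq, add_comm]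
  rcases eq_or_ne ‖z‖ 0 with hz0 | hz0
  · obtain ⟨rfl, rfl⟩ : a = 0 ∧ b = 0 := by
      have : z = 0 := norm_eq_zero.mp hz0
      exact ⟨congrArg Complex.im this, congrArg Complex.re this⟩
    exact ⟨0, by simp⟩
  · refine ⟨Complex.arg z, mul_left_cancel₀ hz0 ?_⟩
    calc ‖z‖ * (a * sin z.arg + b * cos z.arg)
        = a * (‖z‖ * sin z.arg) + b * (‖z‖ * cos z.arg) := by ring
      _ = ‖z‖ * ‖z‖ := by
        rw [Complex.norm_mul_sin_arg, Complex.norm_mul_cos_arg, hz, mul_self_sqrt (by positivity)]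
        exact (by ring : a * a + b * b = a ^ 2 + b ^ 2)
      _ = ‖z‖ * √(a ^ 2 + b ^ 2) := by rw [hz]

theorem forall_abs_mul_sin_add_mul_cos_le_iff (a b c : ℝ) :
    (∀ Φ, |a * sin Φ + b * cos Φ| ≤ c) ↔ √(a ^ 2 + b ^ 2) ≤ c := by
  refine ⟨fun h => ?_, fun h Φ => (abs_mul_sin_add_mul_cos_le_sqrt a b Φ).trans h⟩
  obtain ⟨Φ, hΦ⟩ := exists_mul_sin_add_mul_cos_eq_sqrt a b
  exact hΦ ▸ (le_abs_self _).trans (h Φ)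

theorem unambiguous_imaging_region_general
    (lam R H T₀ ω : ℝ) (hlam : 0 < lam)
    (hω : 0 < ω) (x y : ℝ) :
    (∀ Φ : ℝ,
        |(2 * ω / lam) * (1 / Real.sqrt (1 + H ^ 2 / R ^ 2)) *
            (-x * Real.sin Φ + y * Real.cos Φ)| ≤ 1 / (2 * T₀)) ↔
      Real.sqrt (x ^ 2 + y ^ 2) ≤
        (lam / (4 * ω * T₀)) * Real.sqrt (1 + H ^ 2 / R ^ 2) := by
  set S := Real.sqrt (1 + H ^ 2 / R ^ 2)
  have hS : 0 < S := sqrt_pos.mpr (by positivity)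
  have hk : 0 < 2 * ω / lam * (1 / S) := by positivity
  have hthreshold : 1 / (2 * T₀) / (2 * ω / lam * (1 / S)) = lam / (4 * ω * T₀) * S := by
    field_simp
    ring
  calc (∀ Φ, |2 * ω / lam * (1 / S) * (-x * sin Φ + y * cos Φ)| ≤ 1 / (2 * T₀))
      ↔ ∀ Φ, |-x * sin Φ + y * cos Φ| ≤ 1 / (2 * T₀) / (2 * ω / lam * (1 / S)) :=
        forall_congr' fun Φ => by rw [abs_mul, abs_of_pos hk, le_div_iff₀' hk]
    _ ↔ √((-x) ^ 2 + y ^ 2) ≤ 1 / (2 * T₀) / (2 * ω / lam * (1 / S)) :=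
        forall_abs_mul_sin_add_mul_cos_le_iff (-x) y _
    _ ↔ √(x ^ 2 + y ^ 2) ≤ lam / (4 * ω * T₀) * S := by rw [neg_sq, hthreshold]

/-- **Proposition 2 (Unambiguous Imaging Region).**
The Nyquist no-aliasing condition `|D_f(x,y;Φ)| ≤ 1/(2T₀)` holds for every azimuth
angle `Φ` if and only if the scatterer lies in the closed disk
`√(x² + y²) ≤ (λ/(4ωT₀))·√(1 + H²/R²)`. -/
theorem unambiguous_imaging_region
    (lam R H T₀ ω : ℝ) (hlam : 0 < lam) (hR : 0 < R) (hH : 0 ≤ H)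
    (hT₀ : 0 < T₀) (hω : 0 < ω) (x y : ℝ) :
    (∀ Φ : ℝ,
        |(2 * ω / lam) * (1 / Real.sqrt (1 + H ^ 2 / R ^ 2)) *
            (-x * Real.sin Φ + y * Real.cos Φ)| ≤ 1 / (2 * T₀)) ↔
      Real.sqrt (x ^ 2 + y ^ 2) ≤
        (lam / (4 * ω * T₀)) * Real.sqrt (1 + H ^ 2 / R ^ 2) :=
  unambiguous_imaging_region_general lam R H T₀ ω hlam hω x y
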